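/- Let n, p ∈ ℕ and t ∈ ℝ. Let X, ξ ∈ ℝ^{n×p} satisfy XᵀX = I_p and Xᵀξ + ξᵀX = 0. Set A = I_p + t²·ξᵀξ (a symmetric positive definite, hence invertible, matrix), let S = √((A³)⁻¹) and P = √((A⁵)⁻¹) (so S = A^{−3/2} and P = A^{−5/2}), and set C = −3t·ξ·P·(ξᵀξ) − X·S·(ξᵀξ) + 3t²·X·P·(ξᵀξ)², which is the closed form of the acceleration (d²/dt²)R_X(tξ) of the polar-decomposition retraction curve. Then Tr(CᵀC) ≤ (Tr(ξᵀξ))²; equivalently, ‖C‖_F ≤ ‖ξ‖_F². -/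

import Mathlib

open Matrix

open scoped ComplexOrder in
/-- The positive semidefinite square root of a positive semidefinite matrix, as defined in
Mathlib of December 2024 (`Matrix.PosSemidef.sqrt`, since removed from Mathlib). -/
noncomputable def Matrix.PosSemidef.sqrt {n 𝕜 : Type*} [Fintype n] [RCLike 𝕜] [DecidableEq n]
    {A : Matrix n n 𝕜} (hA : A.PosSemidef) : Matrix n n 𝕜 :=
  hA.1.eigenvectorUnitary.1 * diagonal ((↑) ∘ (√·) ∘ hA.1.eigenvalues) *
  (star hA.1.eigenvectorUnitary : Matrix n n 𝕜)

namespace StiefelAuxPolar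

variable {p : ℕ} {B : Matrix (Fin p) (Fin p) ℝ} (hB : B.IsHermitian)

/-- Functional calculus for a real symmetric matrix via its spectral decomposition. -/
noncomputable def F (f : ℝ → ℝ) : Matrix (Fin p) (Fin p) ℝ :=
  (hB.eigenvectorUnitary : Matrix (Fin p) (Fin p) ℝ) * diagonal (f ∘ hB.eigenvalues) *
    star (hB.eigenvectorUnitary : Matrix (Fin p) (Fin p) ℝ)

lemma star_mul_self_U :
    star (hB.eigenvectorUnitary : Matrix (Fin p) (Fin p) ℝ) *
      (hB.eigenvectorUnitary : Matrix (Fin p) (Fin p) ℝ) = 1 :=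
  mem_unitaryGroup_iff'.mp hB.eigenvectorUnitary.2

lemma F_congr {f g : ℝ → ℝ} (h : ∀ i, f (hB.eigenvalues i) = g (hB.eigenvalues i)) :
    F hB f = F hB g := by
  have : f ∘ hB.eigenvalues = g ∘ hB.eigenvalues := funext h
  unfold F
  rw [this]

lemma F_mul (f g : ℝ → ℝ) : F hB f * F hB g = F hB (fun x => f x * g x) := by
  unfold F
  simp only [mul_assoc]
  rw [← mul_assoc (star (hB.eigenvectorUnitary : Matrix (Fin p) (Fin p) ℝ)),
    star_mul_self_U hB, one_mul, ← mul_assoc (diagonal (f ∘ hB.eigenvalues)),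
    diagonal_mul_diagonal]
  congr 2

lemma F_one : F hB (fun _ => 1) = 1 := by
  unfold F
  rw [show ((fun _ => (1:ℝ)) ∘ hB.eigenvalues) = fun _ => (1:ℝ) from rfl, diagonal_one, mul_one]
  exact mem_unitaryGroup_iff.mp hB.eigenvectorUnitary.2

lemma F_id : F hB (fun x => x) = B := by
  have h : (fun (x:ℝ) => x) ∘ hB.eigenvalues = RCLike.ofReal ∘ hB.eigenvalues := by
    funext i; simp
  unfold F
  rw [h]
  have := hB.spectral_theorem
  rw [Unitary.conjStarAlgAut_apply] at this
  exact this.symm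

lemma F_smul (c : ℝ) (f : ℝ → ℝ) : c • F hB f = F hB (fun x => c * f x) := by
  unfold F
  rw [show ((fun x => c * f x) ∘ hB.eigenvalues) = c • (f ∘ hB.eigenvalues) from rfl,
    diagonal_smul, Matrix.mul_smul, Matrix.smul_mul]

lemma F_add (f g : ℝ → ℝ) : F hB f + F hB g = F hB (fun x => f x + g x) := by
  unfold F
  rw [← add_mul, ← mul_add, diagonal_add]
  congr 2

lemma F_sub (f g : ℝ → ℝ) : F hB f - F hB g = F hB (fun x => f x - g x) := by
  unfold F
  rw [← sub_mul, ← mul_sub, diagonal_sub]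
  congr 2

lemma F_herm (f : ℝ → ℝ) : (F hB f).IsHermitian := by
  unfold F
  simp only [IsHermitian, conjTranspose_mul, conjTranspose_conjTranspose,
    star_eq_conjTranspose, diagonal_conjTranspose]
  rw [show star (f ∘ hB.eigenvalues) = f ∘ hB.eigenvalues from funext fun i => star_trivial _,
    mul_assoc]

lemma F_transpose (f : ℝ → ℝ) : (F hB f)ᵀ = F hB f := by
  rw [← conjTranspose_eq_transpose_of_trivial]
  exact F_herm hB f

lemma F_posSemidef {f : ℝ → ℝ} (h : ∀ i, 0 ≤ f (hB.eigenvalues i)) :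
    (F hB f).PosSemidef := by
  unfold F
  rw [star_eq_conjTranspose]
  exact PosSemidef.mul_mul_conjTranspose_same
    (posSemidef_diagonal_iff.mpr fun i => h i) _

lemma F_trace (f : ℝ → ℝ) : (F hB f).trace = ∑ i, f (hB.eigenvalues i) := by
  unfold F
  rw [trace_mul_cycle, star_mul_self_U hB, one_mul, trace_diagonal]
  rfl

lemma F_mul_id (f : ℝ → ℝ) : F hB f * B = F hB (fun x => f x * x) :=
  calc F hB f * B = F hB f * F hB (fun x => x) := by rw [F_id]
    _ = F hB (fun x => f x * x) := F_mul hB _ _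

lemma id_mul_F (f : ℝ → ℝ) : B * F hB f = F hB (fun x => x * f x) :=
  calc B * F hB f = F hB (fun x => x) * F hB f := by rw [F_id]
    _ = F hB (fun x => x * f x) := F_mul hB _ _

lemma F_mul_id_sq (f : ℝ → ℝ) : F hB f * B ^ 2 = F hB (fun x => f x * x * x) := by
  rw [sq, ← mul_assoc, F_mul_id, F_mul_id]

lemma trace_eq_sum_ev : B.trace = ∑ i, hB.eigenvalues i :=
  calc B.trace = (F hB (fun x => x)).trace := by rw [F_id]
    _ = ∑ i, hB.eigenvalues i := F_trace hB _

/-- The pointwise (eigenvalue-wise) inequality. -/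
lemma scalar_bound (t b : ℝ) (hb : 0 ≤ b) :
    (-(3 * t) * (Real.sqrt (((1 + t ^ 2 * b) ^ 5)⁻¹) * b)) *
        (b * (-(3 * t) * (Real.sqrt (((1 + t ^ 2 * b) ^ 5)⁻¹) * b)))
      + (3 * t ^ 2 * (Real.sqrt (((1 + t ^ 2 * b) ^ 5)⁻¹) * b * b) -
          Real.sqrt (((1 + t ^ 2 * b) ^ 3)⁻¹) * b) *
        (3 * t ^ 2 * (Real.sqrt (((1 + t ^ 2 * b) ^ 5)⁻¹) * b * b) -
          Real.sqrt (((1 + t ^ 2 * b) ^ 3)⁻¹) * b)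
      ≤ b ^ 2 := by
  have hs : 0 ≤ t ^ 2 * b := mul_nonneg (sq_nonneg t) hb
  have ha : (0:ℝ) < 1 + t ^ 2 * b := by linarith
  have h3 : Real.sqrt (((1 + t ^ 2 * b) ^ 3)⁻¹) ^ 2 = ((1 + t ^ 2 * b) ^ 3)⁻¹ :=
    Real.sq_sqrt (by positivity)
  have h5 : Real.sqrt (((1 + t ^ 2 * b) ^ 5)⁻¹) ^ 2 = ((1 + t ^ 2 * b) ^ 5)⁻¹ :=
    Real.sq_sqrt (by positivity)
  have h35 : Real.sqrt (((1 + t ^ 2 * b) ^ 3)⁻¹) * Real.sqrt (((1 + t ^ 2 * b) ^ 5)⁻¹)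
      = ((1 + t ^ 2 * b) ^ 4)⁻¹ := by
    rw [← Real.sqrt_mul (by positivity),
      show ((1 + t ^ 2 * b) ^ 3)⁻¹ * ((1 + t ^ 2 * b) ^ 5)⁻¹ = (((1 + t ^ 2 * b) ^ 4)⁻¹) ^ 2 by
        rw [← mul_inv, ← pow_add, inv_pow, ← pow_mul]]
    exact Real.sqrt_sq (by positivity)
  set u := Real.sqrt (((1 + t ^ 2 * b) ^ 3)⁻¹) with hu
  set v := Real.sqrt (((1 + t ^ 2 * b) ^ 5)⁻¹) with hv
  have hLHS : (-(3 * t) * (v * b)) * (b * (-(3 * t) * (v * b)))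
      + (3 * t ^ 2 * (v * b * b) - u * b) * (3 * t ^ 2 * (v * b * b) - u * b)
      = 9 * t ^ 2 * b ^ 3 * v ^ 2 + b ^ 2 * u ^ 2 - 6 * t ^ 2 * b ^ 3 * (u * v)
        + 9 * t ^ 4 * b ^ 4 * v ^ 2 := by ring
  rw [hLHS, h3, h5, h35, ← sub_nonneg]
  have key : b ^ 2 - (9 * t ^ 2 * b ^ 3 * ((1 + t ^ 2 * b) ^ 5)⁻¹
        + b ^ 2 * ((1 + t ^ 2 * b) ^ 3)⁻¹ - 6 * t ^ 2 * b ^ 3 * ((1 + t ^ 2 * b) ^ 4)⁻¹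
        + 9 * t ^ 4 * b ^ 4 * ((1 + t ^ 2 * b) ^ 5)⁻¹)
      = (6 * (t ^ 2 * b) ^ 2 + 10 * (t ^ 2 * b) ^ 3 + 5 * (t ^ 2 * b) ^ 4 + (t ^ 2 * b) ^ 5)
          * b ^ 2 / (1 + t ^ 2 * b) ^ 5 := by
    field_simp
    ring
  rw [key]
  apply div_nonneg _ (by positivity)
  apply mul_nonneg _ (sq_nonneg b)
  have h2' := pow_nonneg hs 2
  have h3' := pow_nonneg hs 3
  have h4' := pow_nonneg hs 4
  have h5' := pow_nonneg hs 5
  linarith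

end StiefelAuxPolar

section Main

open StiefelAuxPolar

/-- Second condition of Assumption 2 for the polar-decomposition retraction on the
Stiefel manifold: with `A = I + t²ξᵀξ`, `S = A^{−3/2}`, `P = A^{−5/2}` and
`C = (d²/dt²)R_X(tξ) = −3t·ξ·P·(ξᵀξ) − X·S·(ξᵀξ) + 3t²·X·P·(ξᵀξ)²`, we have
`Tr(CᵀC) ≤ (Tr(ξᵀξ))²`, i.e. `‖C‖_F ≤ ‖ξ‖_F²`. -/
theorem stiefel_polar_acceleration_norm_bound {n p : ℕ} (t : ℝ)
    (X ξ : Matrix (Fin n) (Fin p) ℝ)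
    (hX : Xᵀ * X = 1) (hξ : Xᵀ * ξ + ξᵀ * X = 0)
    (hA3 : ((((1 : Matrix (Fin p) (Fin p) ℝ) + t ^ 2 • (ξᵀ * ξ)) ^ 3)⁻¹).PosSemidef)
    (hA5 : ((((1 : Matrix (Fin p) (Fin p) ℝ) + t ^ 2 • (ξᵀ * ξ)) ^ 5)⁻¹).PosSemidef) :
    (((-(3 * t)) • (ξ * hA5.sqrt * (ξᵀ * ξ)) - X * hA3.sqrt * (ξᵀ * ξ)
          + (3 * t ^ 2) • (X * hA5.sqrt * (ξᵀ * ξ) ^ 2))ᵀ *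
        ((-(3 * t)) • (ξ * hA5.sqrt * (ξᵀ * ξ)) - X * hA3.sqrt * (ξᵀ * ξ)
          + (3 * t ^ 2) • (X * hA5.sqrt * (ξᵀ * ξ) ^ 2))).trace
      ≤ (ξᵀ * ξ).trace ^ 2 := by
  have hBps : (ξᵀ * ξ).PosSemidef :=
    conjTranspose_eq_transpose_of_trivial ξ ▸ posSemidef_conjTranspose_mul_self ξ
  have hB : (ξᵀ * ξ).IsHermitian := hBps.1
  have hev : ∀ i, 0 ≤ hB.eigenvalues i := fun i => hBps.eigenvalues_nonneg i
  have hevpos : ∀ i, (0:ℝ) < 1 + t ^ 2 * hB.eigenvalues i := fun i => by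
    nlinarith [sq_nonneg t, hev i, mul_nonneg (sq_nonneg t) (hev i)]
  set s3 : ℝ → ℝ := fun x => Real.sqrt (((1 + t ^ 2 * x) ^ 3)⁻¹) with hs3def
  set s5 : ℝ → ℝ := fun x => Real.sqrt (((1 + t ^ 2 * x) ^ 5)⁻¹) with hs5def
  -- the base matrix A = 1 + t² B as functional calculus
  have hFA : (1 : Matrix (Fin p) (Fin p) ℝ) + t ^ 2 • (ξᵀ * ξ)
      = F hB (fun x => 1 + t ^ 2 * x) := by
    calc (1 : Matrix (Fin p) (Fin p) ℝ) + t ^ 2 • (ξᵀ * ξ)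
        = F hB (fun _ => 1) + t ^ 2 • F hB (fun x => x) := by rw [F_one, F_id]
      _ = F hB (fun x => 1 + t ^ 2 * x) := by rw [F_smul, F_add]
  -- inverses of powers
  have hInv : ∀ k : ℕ, (((1 : Matrix (Fin p) (Fin p) ℝ) + t ^ 2 • (ξᵀ * ξ)) ^ k)⁻¹
      = F hB (fun x => ((1 + t ^ 2 * x) ^ k)⁻¹) := by
    intro k
    apply inv_eq_right_inv
    have hpow : ((1 : Matrix (Fin p) (Fin p) ℝ) + t ^ 2 • (ξᵀ * ξ)) ^ k
        = F hB (fun x => (1 + t ^ 2 * x) ^ k) := by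
      rw [hFA]
      induction k with
      | zero => simpa using (F_one hB).symm
      | succ m ih =>
          rw [pow_succ, ih, F_mul]
          apply F_congr
          intro i
          ring
    rw [hpow, F_mul, ← F_one hB]
    apply F_congr
    intro i
    exact mul_inv_cancel₀ (pow_ne_zero _ (hevpos i).ne')
  -- identify the square roots
  have hs3 : hA3.sqrt = F hB s3 := by
    have e1 : hA3.sqrt = cfc Real.sqrt
        ((((1 : Matrix (Fin p) (Fin p) ℝ) + t ^ 2 • (ξᵀ * ξ)) ^ 3)⁻¹) := by
      rw [hA3.1.cfc_eq]
      unfold Matrix.PosSemidef.sqrt IsHermitian.cfc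
      rw [Unitary.conjStarAlgAut_apply]
    have e2 : ∀ f, F hB f = cfc f (ξᵀ * ξ) := by
      intro f
      rw [hB.cfc_eq]
      unfold F IsHermitian.cfc
      rw [Unitary.conjStarAlgAut_apply]
      rfl
    rw [e1, hInv 3, e2, e2, ← cfc_comp Real.sqrt _ (ξᵀ * ξ) hB.isSelfAdjoint
      Real.continuous_sqrt.continuousOn (Matrix.finite_real_spectrum.continuousOn _)]
    rfl
  have hs5 : hA5.sqrt = F hB s5 := by
    have e1 : hA5.sqrt = cfc Real.sqrt
        ((((1 : Matrix (Fin p) (Fin p) ℝ) + t ^ 2 • (ξᵀ * ξ)) ^ 5)⁻¹) := by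
      rw [hA5.1.cfc_eq]
      unfold Matrix.PosSemidef.sqrt IsHermitian.cfc
      rw [Unitary.conjStarAlgAut_apply]
    have e2 : ∀ f, F hB f = cfc f (ξᵀ * ξ) := by
      intro f
      rw [hB.cfc_eq]
      unfold F IsHermitian.cfc
      rw [Unitary.conjStarAlgAut_apply]
      rfl
    rw [e1, hInv 5, e2, e2, ← cfc_comp Real.sqrt _ (ξᵀ * ξ) hB.isSelfAdjoint
      Real.continuous_sqrt.continuousOn (Matrix.finite_real_spectrum.continuousOn _)]
    rfl
  set m1 : ℝ → ℝ := fun x => -(3 * t) * (s5 x * x) with hm1def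
  set m2 : ℝ → ℝ := fun x => 3 * t ^ 2 * (s5 x * x * x) - s3 x * x with hm2def
  -- rewrite the acceleration as ξ * F m1 + X * F m2
  have hC : (-(3 * t)) • (ξ * hA5.sqrt * (ξᵀ * ξ)) - X * hA3.sqrt * (ξᵀ * ξ)
      + (3 * t ^ 2) • (X * hA5.sqrt * (ξᵀ * ξ) ^ 2)
      = ξ * F hB m1 + X * F hB m2 := by
    rw [hs3, hs5, Matrix.mul_assoc ξ (F hB s5) (ξᵀ * ξ), F_mul_id,
      Matrix.mul_assoc X (F hB s3) (ξᵀ * ξ), F_mul_id,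
      Matrix.mul_assoc X (F hB s5) ((ξᵀ * ξ) ^ 2), F_mul_id_sq]
    rw [show (-(3 * t)) • (ξ * F hB fun x => s5 x * x) = ξ * F hB m1 by
      rw [← Matrix.mul_smul, F_smul]]
    rw [show (3 * t ^ 2) • (X * F hB fun x => s5 x * x * x)
        = X * F hB (fun x => 3 * t ^ 2 * (s5 x * x * x)) by
      rw [← Matrix.mul_smul, F_smul]]
    rw [sub_add_eq_add_sub, add_sub_assoc, ← Matrix.mul_sub, F_sub]
  rw [hC]
  -- expand the product
  set M1 := F hB m1 with hM1
  set M2 := F hB m2 with hM2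
  have hexp : (ξ * M1 + X * M2)ᵀ * (ξ * M1 + X * M2)
      = (M1 * ((ξᵀ * ξ) * M1) + M2 * M2)
        + (M1 * ((ξᵀ * X) * M2) + M2 * ((Xᵀ * ξ) * M1)) := by
    rw [transpose_add, transpose_mul, transpose_mul, hM1, hM2, F_transpose, F_transpose,
      ← hM1, ← hM2, Matrix.add_mul, Matrix.mul_add, Matrix.mul_add]
    have e1 : M1 * ξᵀ * (ξ * M1) = M1 * ((ξᵀ * ξ) * M1) := by
      rw [Matrix.mul_assoc, ← Matrix.mul_assoc ξᵀ ξ M1]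
    have e2 : M1 * ξᵀ * (X * M2) = M1 * ((ξᵀ * X) * M2) := by
      rw [Matrix.mul_assoc, ← Matrix.mul_assoc ξᵀ X M2]
    have e3 : M2 * Xᵀ * (ξ * M1) = M2 * ((Xᵀ * ξ) * M1) := by
      rw [Matrix.mul_assoc, ← Matrix.mul_assoc Xᵀ ξ M1]
    have e4 : M2 * Xᵀ * (X * M2) = M2 * M2 := by
      rw [Matrix.mul_assoc, ← Matrix.mul_assoc Xᵀ X M2, hX, Matrix.one_mul]
    rw [e1, e2, e3, e4]
    abel
  rw [hexp, trace_add, trace_add, trace_add]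
  -- cross terms vanish
  have hcomm : M2 * M1 = M1 * M2 := by
    rw [hM1, hM2, F_mul, F_mul]
    exact F_congr hB fun i => mul_comm _ _
  have hcross : (M1 * ((ξᵀ * X) * M2)).trace + (M2 * ((Xᵀ * ξ) * M1)).trace = 0 := by
    have c1 : (M1 * ((ξᵀ * X) * M2)).trace = (M1 * M2 * (ξᵀ * X)).trace := by
      rw [← Matrix.mul_assoc, trace_mul_cycle, hcomm]
    have c2 : (M2 * ((Xᵀ * ξ) * M1)).trace = (M1 * M2 * (Xᵀ * ξ)).trace := by
      rw [← Matrix.mul_assoc, trace_mul_cycle, ← hcomm]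
    rw [c1, c2, ← trace_add, ← Matrix.mul_add,
      show ξᵀ * X + Xᵀ * ξ = 0 from by rw [add_comm]; exact hξ]
    simp
  rw [hcross, add_zero]
  -- main terms as traces of functional calculus
  have hmain1 : (M1 * ((ξᵀ * ξ) * M1)).trace
      = ∑ i, m1 (hB.eigenvalues i) * (hB.eigenvalues i * m1 (hB.eigenvalues i)) := by
    rw [hM1, id_mul_F, F_mul, F_trace]
  have hmain2 : (M2 * M2).trace = ∑ i, m2 (hB.eigenvalues i) * m2 (hB.eigenvalues i) := by
    rw [hM2, F_mul, F_trace]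
  rw [hmain1, hmain2, ← Finset.sum_add_distrib, trace_eq_sum_ev hB]
  calc ∑ i, (m1 (hB.eigenvalues i) * (hB.eigenvalues i * m1 (hB.eigenvalues i))
        + m2 (hB.eigenvalues i) * m2 (hB.eigenvalues i))
      ≤ ∑ i, hB.eigenvalues i ^ 2 := by
        apply Finset.sum_le_sum
        intro i _
        simpa [hm1def, hm2def, hs3def, hs5def] using
          scalar_bound t (hB.eigenvalues i) (hev i)
    _ ≤ (∑ i, hB.eigenvalues i) ^ 2 :=
        Finset.sum_sq_le_sq_sum_of_nonneg fun i _ => hev i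

end Main
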